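/- The BJGP-gadget satisfies properties P1–P4: its vertex set contains the vertices x_j for j in S; it has a perfect matching; for each pair p ≠ q in S, the graph obtained by deleting x_p and x_q, if non-empty, has a perfect matching; and for each subset L of S with |L| ≥ 3, the graph obtained by deleting {x_l : l ∈ L}, if non-empty, has no perfect matching. -/

import Mathlib

/-- Vertex set of the BJGP- and XP-gadgets for colour set `α` with minimum `m` and
maximum `M`: the vertices `x_j` (`Sum.inl j`, `j ∈ S`) and the vertices `y_j`
(`Sum.inr j`, `j ∈ S \ {m, M}`). -/
abbrev GadVert (α : Type*) (m M : α) : Type _ := α ⊕ {j : α // j ≠ m ∧ j ≠ M}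

/-- The BJGP-gadget (Bang-Jensen and Gutin): edges `x_j y_k` for all `j ∈ S`,
`k ∈ S \ {m, M}`, and `x_j x_k` for all `j ≠ k ∈ S`. -/
def bjgpGadget {α : Type*} (m M : α) : SimpleGraph (GadVert α m M) :=
  SimpleGraph.fromRel (fun a b =>
    match a, b with
    | Sum.inl _, Sum.inr _ => True
    | Sum.inl j, Sum.inl k => j ≠ k
    | _, _ => False)

/-!
Let `n = |S|`. For `p ≠ q`, an involution along edges pairs `x_p` with `x_q` and the other
`n - 2` vertices `x_j` with the `n - 2` vertices `y_k` through any bijection. It restricts to a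
perfect matching of the gadget without `x_p, x_q`, and for `p, q = m, M` it is one of the whole
gadget. Conversely the `y_k` form an independent set, so in a perfect matching they need `n - 2`
distinct partners, while only `n - |L| ≤ n - 3` vertices `x_j` survive the deletion of `L`.
-/

open SimpleGraph

namespace SimpleGraph

variable {V : Type*} {G : SimpleGraph V}

theorem exists_isPerfectMatching_of_involutive {f : V → V} (hf : Function.Involutive f)
    (hadj : ∀ v, G.Adj v (f v)) : ∃ M : G.Subgraph, M.IsPerfectMatching := by
  let M : G.Subgraph :=
    { verts := Set.univ
      Adj := fun v w => f v = w
      adj_sub := by rintro v _ rfl; exact hadj v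
      edge_vert := fun _ => trivial
      symm := ⟨by rintro v _ rfl; exact hf v⟩ }
  exact ⟨M, Subgraph.isPerfectMatching_iff.mpr fun v => ⟨f v, rfl, fun _ h => Eq.symm h⟩⟩

theorem exists_isPerfectMatching_induce_of_involutive {f : V → V} {W : Set V}
    (hf : Function.Involutive f) (hfW : Set.MapsTo f W W) (hadj : ∀ v ∈ W, G.Adj v (f v)) :
    ∃ M : (G.induce W).Subgraph, M.IsPerfectMatching :=
  exists_isPerfectMatching_of_involutive (f := hfW.restrict f W W)
    (fun v => Subtype.ext (hf v)) (fun v => hadj v v.prop)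

theorem Subgraph.IsPerfectMatching.ncard_le_ncard_compl_of_isIndepSet [Finite V]
    {M : G.Subgraph} (hM : M.IsPerfectMatching) {s : Set V} (hs : G.IsIndepSet s) :
    s.ncard ≤ sᶜ.ncard := by
  rw [Subgraph.isPerfectMatching_iff] at hM
  choose partner hpartner hunique using hM
  refine Set.ncard_le_ncard_of_injOn partner (fun v hv hpv => ?_) (fun v _ w _ h => ?_)
  · exact hs hv hpv (M.adj_sub (hpartner v)).ne (M.adj_sub (hpartner v))
  · exact (hunique _ v (hpartner v).symm).trans (hunique _ w (h ▸ (hpartner w).symm)).symm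

theorem ncard_le_ncard_diff_of_isPerfectMatching_induce [Finite V] {W s : Set V}
    {M : (G.induce W).Subgraph} (hM : M.IsPerfectMatching) (hs : G.IsIndepSet s) (hsW : s ⊆ W) :
    s.ncard ≤ (W \ s).ncard := by
  have hs' : (G.induce W).IsIndepSet (Subtype.val ⁻¹' s) :=
    fun v hv w hw hvw => hs hv hw (Subtype.val_injective.ne hvw)
  have key := hM.ncard_le_ncard_compl_of_isIndepSet hs'
  rwa [← Set.preimage_compl, Set.ncard_preimage_of_injective_subset_range Subtype.val_injective
      (by simpa using hsW), ← Set.ncard_image_of_injective _ Subtype.val_injective,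
    Set.image_preimage_eq_inter_range, Subtype.range_coe, Set.inter_comm, ← Set.sdiff_eq] at key

end SimpleGraph

theorem Fintype.card_subtype_ne_and_ne {α : Type*} [Fintype α] [DecidableEq α] {a b : α}
    (hab : a ≠ b) : Fintype.card {j : α // j ≠ a ∧ j ≠ b} = Fintype.card α - 2 := by
  have hfilter : ({j | j ≠ a ∧ j ≠ b} : Finset α) = {a, b}ᶜ := by
    ext j
    simp
  rw [Fintype.card_subtype, hfilter, Finset.card_compl, Finset.card_pair hab]

section bjgpGadget

variable {α : Type*} {m M : α}

theorem bjgpGadget_adj_inl_inr (j : α) (k : {j : α // j ≠ m ∧ j ≠ M}) :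
    (bjgpGadget m M).Adj (.inl j) (.inr k) := by
  simp [bjgpGadget]

theorem bjgpGadget_adj_inl_inl {j k : α} : (bjgpGadget m M).Adj (.inl j) (.inl k) ↔ j ≠ k := by
  simp [bjgpGadget, ne_comm]

theorem bjgpGadget_isIndepSet_range_inr :
    (bjgpGadget m M).IsIndepSet (Set.range Sum.inr) := by
  rintro _ ⟨j, rfl⟩ _ ⟨k, rfl⟩ -
  simp [bjgpGadget]

variable [DecidableEq α]

def bjgpPairing {p q : α} (e : {j : α // j ≠ p ∧ j ≠ q} ≃ {j : α // j ≠ m ∧ j ≠ M}) :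
    GadVert α m M → GadVert α m M
  | .inl j => if h : j ≠ p ∧ j ≠ q then .inr (e ⟨j, h⟩) else .inl (if j = p then q else p)
  | .inr k => .inl (e.symm k)

variable {p q : α} (e : {j : α // j ≠ p ∧ j ≠ q} ≃ {j : α // j ≠ m ∧ j ≠ M})

theorem bjgpPairing_involutive (hpq : p ≠ q) : Function.Involutive (bjgpPairing e) := by
  rintro (j | k)
  · by_cases h : j ≠ p ∧ j ≠ q
    · simp [bjgpPairing, h]
    · obtain rfl | rfl : j = p ∨ j = q := by tauto
      · simp [bjgpPairing, hpq.symm]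
      · simp [bjgpPairing, hpq]
  · simp [bjgpPairing, (e.symm k).prop]

theorem bjgpGadget_adj_bjgpPairing (hpq : p ≠ q) (v : GadVert α m M) :
    (bjgpGadget m M).Adj v (bjgpPairing e v) := by
  rcases v with j | k
  · by_cases h : j ≠ p ∧ j ≠ q
    · simpa [bjgpPairing, h] using bjgpGadget_adj_inl_inr j _
    · obtain rfl | rfl : j = p ∨ j = q := by tauto
      · simpa [bjgpPairing, bjgpGadget_adj_inl_inl] using hpq
      · simpa [bjgpPairing, bjgpGadget_adj_inl_inl] using hpq.symm
  · exact (bjgpGadget_adj_inl_inr _ k).symm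

theorem bjgpPairing_mapsTo :
    Set.MapsTo (bjgpPairing e) {v | v ≠ .inl p ∧ v ≠ .inl q} {v | v ≠ .inl p ∧ v ≠ .inl q} := by
  rintro (j | k) hv
  · simp_all [bjgpPairing]
  · simpa [bjgpPairing] using (e.symm k).prop

theorem exists_isPerfectMatching_bjgpGadget (hmM : m ≠ M) :
    ∃ Mat : (bjgpGadget m M).Subgraph, Mat.IsPerfectMatching :=
  exists_isPerfectMatching_of_involutive (bjgpPairing_involutive (.refl _) hmM)
    (bjgpGadget_adj_bjgpPairing _ hmM)

variable [Fintype α]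

theorem exists_isPerfectMatching_induce_bjgpGadget (hmM : m ≠ M) (hpq : p ≠ q) :
    ∃ Mat : ((bjgpGadget m M).induce {v | v ≠ .inl p ∧ v ≠ .inl q}).Subgraph,
      Mat.IsPerfectMatching := by
  let e : {j : α // j ≠ p ∧ j ≠ q} ≃ {j : α // j ≠ m ∧ j ≠ M} :=
    Fintype.equivOfCardEq <| by
      rw [Fintype.card_subtype_ne_and_ne hpq, Fintype.card_subtype_ne_and_ne hmM]
  exact exists_isPerfectMatching_induce_of_involutive (bjgpPairing_involutive e hpq)
    (bjgpPairing_mapsTo e) fun v _ => bjgpGadget_adj_bjgpPairing e hpq v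

theorem not_exists_isPerfectMatching_induce_bjgpGadget (hmM : m ≠ M) {L : Finset α}
    (hL : 3 ≤ L.card) :
    ¬ ∃ Mat : ((bjgpGadget m M).induce {v | ∀ l ∈ L, v ≠ .inl l}).Subgraph,
      Mat.IsPerfectMatching := by
  rintro ⟨Mat, hMat⟩
  have hpartners := ncard_le_ncard_diff_of_isPerfectMatching_induce hMat
    bjgpGadget_isIndepSet_range_inr (by rintro _ ⟨k, rfl⟩ l -; simp)
  have hy : (Set.range (Sum.inr : _ → GadVert α m M)).ncard = Fintype.card α - 2 := by
    rw [Set.ncard_range_of_injective Sum.inr_injective, Nat.card_eq_fintype_card,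
      Fintype.card_subtype_ne_and_ne hmM]
  have hx : ({v | ∀ l ∈ L, v ≠ .inl l} \ Set.range Sum.inr).ncard ≤ Fintype.card α - L.card :=
    calc _ ≤ (Sum.inl '' (↑Lᶜ : Set α) : Set (GadVert α m M)).ncard := by
          refine Set.ncard_le_ncard ?_
          rintro (j | k) ⟨hW, hr⟩
          · exact ⟨j, by simpa using hW, rfl⟩
          · exact absurd ⟨k, rfl⟩ hr
      _ = Fintype.card α - L.card := by
          rw [Set.ncard_image_of_injective _ Sum.inl_injective, Set.ncard_coe_finset,
            Finset.card_compl]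
  have := hpartners.trans hx
  have := L.card_le_univ
  omega

end bjgpGadget

/-- The BJGP-gadget satisfies properties P1–P4 of a P-gadget:
(P1) it contains the distinguished vertices `x_q`, `q ∈ S` (pairwise distinct);
(P2) it has a perfect matching;
(P3) deleting `x_p, x_q` for `p ≠ q` leaves a graph which, if non-empty, has a perfect
matching; (P4) deleting `x_l` for all `l` in a set `L` with `|L| ≥ 3` leaves a graph
which, if non-empty, has no perfect matching. -/
theorem bjgpGadget_is_P_gadget (α : Type*) [Fintype α] [LinearOrder α]
    (hcard : 2 ≤ Fintype.card α) (m M : α) (hm : ∀ a, m ≤ a) (hM : ∀ a, a ≤ M) :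
    Function.Injective (Sum.inl : α → GadVert α m M) ∧
    (∃ Mat : (bjgpGadget m M).Subgraph, Mat.IsPerfectMatching) ∧
    (∀ p q : α, p ≠ q →
      (Nonempty ↥{v : GadVert α m M | v ≠ Sum.inl p ∧ v ≠ Sum.inl q} →
        ∃ Mat : ((bjgpGadget m M).induce
            {v : GadVert α m M | v ≠ Sum.inl p ∧ v ≠ Sum.inl q}).Subgraph,
          Mat.IsPerfectMatching)) ∧
    (∀ L : Finset α, 3 ≤ L.card →
      (Nonempty ↥{v : GadVert α m M | ∀ l ∈ L, v ≠ Sum.inl l} →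
        ¬ ∃ Mat : ((bjgpGadget m M).induce
            {v : GadVert α m M | ∀ l ∈ L, v ≠ Sum.inl l}).Subgraph,
          Mat.IsPerfectMatching)) := by
  have hmM : m ≠ M := by
    obtain ⟨a, b, hab⟩ := Fintype.exists_pair_of_one_lt_card hcard
    rintro rfl
    exact hab (le_antisymm ((hM a).trans (hm b)) ((hM b).trans (hm a)))
  exact ⟨Sum.inl_injective, exists_isPerfectMatching_bjgpGadget hmM,
    fun p q hpq _ => exists_isPerfectMatching_induce_bjgpGadget hmM hpq,
    fun L hL _ => not_exists_isPerfectMatching_induce_bjgpGadget hmM hL⟩
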